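/- Let $S = K[X_1,\ldots,X_n]$ over a perfect field $K$ of characteristic $p > 0$, let $f \in S$ with $\mathrm{in}_<(f) = X_1^{p-1}\cdots X_n^{p-1}$ for some monomial order $<$. Then $f \star \mathrm{Tr}$ is an $F$-splitting of $S$, and for any ideal $I \subset S$ with $\mathrm{Tr}(fI) \subseteq I$, the initial ideal $\mathrm{in}_<(I)$ is a squarefree monomial ideal. -/

import Mathlib

open MvPolynomial
open scoped Classical

/-- The trace map `Tr : F_*S → S`, the projection onto the basis element
`X_1^{p-1} ⋯ X_n^{p-1}` of the monomial basis of `F_*S` over `S`. -/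
noncomputable def Tr (n p : ℕ) [Fact p.Prime] (K : Type) [Field K] [CharP K p]
    [PerfectRing K p] (g : MvPolynomial (Fin n) K) : MvPolynomial (Fin n) K :=
  ∑ u ∈ g.support,
    if (∀ j, u j % p = p - 1) then
      monomial
        (u.mapRange (fun a => (a + 1) / p - 1)
          (by simp [Nat.div_eq_of_lt (Fact.out : p.Prime).one_lt]))
        ((frobeniusEquiv K p).symm (coeff u g))
    else 0

/-- The leading exponent (multidegree) of a polynomial with respect to a monomial order. -/
noncomputable def lexp {n : ℕ} {K : Type} [Field K] (m : MonomialOrder (Fin n))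
    (f : MvPolynomial (Fin n) K) : Fin n →₀ ℕ :=
  m.toSyn.symm (f.support.sup fun u => m.toSyn u)

/-- The initial ideal `in_<(I)` of an ideal `I`, generated by the leading monomials of
the nonzero elements of `I`. -/
noncomputable def initialIdeal {n : ℕ} {K : Type} [Field K] (m : MonomialOrder (Fin n))
    (I : Ideal (MvPolynomial (Fin n) K)) : Ideal (MvPolynomial (Fin n) K) :=
  Ideal.span {g | ∃ f ∈ I, f ≠ 0 ∧ g = monomial (lexp m f) (1 : K)}

/-- An ideal of `K[X_1,…,X_n]` is a squarefree monomial ideal if it is generated by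
monomials all of whose exponents are at most `1`. -/
def IsSqFreeMonomialIdeal (n : ℕ) (K : Type) [Field K]
    (I : Ideal (MvPolynomial (Fin n) K)) : Prop :=
  ∃ G : Set (Fin n →₀ ℕ), (∀ u ∈ G, ∀ j, u j ≤ 1) ∧
    I = Ideal.span ((fun u => monomial u (1 : K)) '' G)


/-! The trace `Tr g` collects the coefficients of `g` at the exponents `p • c + (p-1, …, p-1)`
and takes their `p`-th roots. Hence `Tr` is `p⁻¹`-linear, `Tr (r ^ p * g) = r * Tr g`, and it sends
a polynomial with leading exponent `p • v + (p-1, …, p-1)` to one with leading exponent `v`.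
In particular `Tr f = 1`, so `Tr (f * r ^ p) = r`.

If `Tr (f * I) ⊆ I` and `g ∈ I` has leading exponent `u`, then `f * X ^ (p • ⌈u/p⌉ - u) * g` has
leading exponent `p • ⌈u/p⌉ + (p-1, …, p-1)`, so its trace is an element of `I` with leading
exponent `⌈u/p⌉`. Iterating until all exponents are at most `1` yields a squarefree leading
monomial of `I` dividing `X ^ u`, so `in(I)` is generated by squarefree monomials. -/

open MonomialOrder

noncomputable def traceExp (n p : ℕ) : Fin n →₀ ℕ :=
  Finsupp.equivFunOnFinite.symm fun _ => p - 1

@[simp]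
lemma traceExp_apply (n p : ℕ) (j : Fin n) : traceExp n p j = p - 1 := rfl

lemma Nat.mod_eq_pred_and_succ_div_pred_iff {p u c : ℕ} (hp : 0 < p) :
    u % p = p - 1 ∧ (u + 1) / p - 1 = c ↔ u = p * c + (p - 1) := by
  constructor
  · rintro ⟨hmod, hdiv⟩
    have hu := Nat.div_add_mod u p
    have hsucc : u + 1 = p * (u / p + 1) := by rw [Nat.mul_succ]; omega
    rw [hsucc, Nat.mul_div_cancel_left _ hp, Nat.add_sub_cancel] at hdiv
    subst hdiv
    omega
  · rintro rfl
    have hsucc : p * c + (p - 1) + 1 = p * (c + 1) := by rw [Nat.mul_succ]; omega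
    rw [hsucc, Nat.mul_div_cancel_left _ hp, Nat.mul_add_mod, Nat.mod_eq_of_lt (by omega)]
    simp

lemma Nat.ceilDiv_lt_self {a p : ℕ} (hp : 2 ≤ p) (ha : 2 ≤ a) : a ⌈/⌉ p < a := by
  have hle : a ⌈/⌉ p ≤ a - 1 := by
    rw [ceilDiv_le_iff_le_mul (by omega)]
    have := Nat.mul_le_mul_right (a - 1) hp
    omega
  omega

lemma Finsupp.ceilDiv_lt_self {ι : Type*} {u : ι →₀ ℕ} {p : ℕ} (hp : 2 ≤ p) {j : ι}
    (hj : 2 ≤ u j) : u ⌈/⌉ p < u := by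
  refine lt_of_le_of_ne ?_ fun h => (Nat.ceilDiv_lt_self hp hj).ne (by rw [← ceilDiv_apply, h])
  rw [ceilDiv_le_iff_le_smul (by omega)]
  exact fun i => Nat.le_mul_of_pos_left (u i) (by omega)

section Trace

variable {n p : ℕ} [hp : Fact p.Prime] {K : Type} [Field K] [CharP K p] [PerfectRing K p]

lemma coeff_Tr (g : MvPolynomial (Fin n) K) (c : Fin n →₀ ℕ) :
    coeff c (Tr n p K g) = (frobeniusEquiv K p).symm (coeff (p • c + traceExp n p) g) := by
  have hexp : ∀ u : Fin n →₀ ℕ, ((∀ j, u j % p = p - 1) ∧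
      u.mapRange (fun a => (a + 1) / p - 1)
        (by simp [Nat.div_eq_of_lt hp.out.one_lt]) = c) ↔ u = p • c + traceExp n p := by
    intro u
    simp only [Finsupp.ext_iff, Finsupp.mapRange_apply, Finsupp.add_apply, Finsupp.smul_apply,
      smul_eq_mul, traceExp_apply, ← forall_and,
      Nat.mod_eq_pred_and_succ_div_pred_iff hp.out.pos]
  simp only [Tr, coeff_sum, apply_ite (coeff c), coeff_monomial, coeff_zero, ← ite_and, hexp,
    Finset.sum_ite_eq']
  split_ifs with h
  · rfl
  · rw [notMem_support_iff.mp h, map_zero]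

lemma Tr_add (g h : MvPolynomial (Fin n) K) : Tr n p K (g + h) = Tr n p K g + Tr n p K h := by
  ext c
  simp only [coeff_Tr, coeff_add, map_add]

lemma smul_le_smul_add_traceExp_iff {u c : Fin n →₀ ℕ} :
    p • u ≤ p • c + traceExp n p ↔ u ≤ c := by
  simp only [Finsupp.le_def, Finsupp.add_apply, Finsupp.smul_apply, smul_eq_mul, traceExp_apply]
  refine forall_congr' fun j => ?_
  have := hp.out.pos
  constructor
  · intro h
    by_contra! hlt
    have := Nat.mul_le_mul_left p (Nat.succ_le_of_lt hlt)
    rw [Nat.mul_succ] at this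
    omega
  · intro h
    have := Nat.mul_le_mul_left p h
    omega

lemma Tr_pow_mul (r g : MvPolynomial (Fin n) K) : Tr n p K (r ^ p * g) = r * Tr n p K g := by
  induction r using MvPolynomial.induction_on' with
  | monomial u a =>
    ext c
    rw [monomial_pow, coeff_Tr, coeff_monomial_mul', coeff_monomial_mul']
    simp only [smul_le_smul_add_traceExp_iff]
    split_ifs with huc
    · rw [coeff_Tr, map_mul, frobeniusEquiv_symm_pow]
      congr 3
      ext j
      have := Nat.mul_le_mul_left p (huc j)
      simp only [Finsupp.tsub_apply, Finsupp.add_apply, Finsupp.smul_apply, smul_eq_mul, Nat.mul_sub]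
      omega
    · exact map_zero _
  | add r s hr hs => rw [add_pow_char, add_mul, Tr_add, hr, hs, add_mul]

variable (m : MonomialOrder (Fin n))

lemma coeff_Tr_of_degree_eq {h : MvPolynomial (Fin n) K} {v : Fin n →₀ ℕ}
    (hv : m.degree h = p • v + traceExp n p) :
    coeff v (Tr n p K h) = (frobeniusEquiv K p).symm (m.leadingCoeff h) := by
  rw [coeff_Tr, leadingCoeff, hv]

lemma degree_Tr_of_degree_eq {h : MvPolynomial (Fin n) K} (hh : h ≠ 0) {v : Fin n →₀ ℕ}
    (hv : m.degree h = p • v + traceExp n p) : m.degree (Tr n p K h) = v := by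
  have hcoeff : coeff v (Tr n p K h) ≠ 0 := by
    rw [coeff_Tr_of_degree_eq m hv, map_ne_zero_iff _ (frobeniusEquiv K p).symm.injective]
    exact m.leadingCoeff_ne_zero_iff.mpr hh
  refine m.toSyn.injective (le_antisymm ?_ (m.le_degree (mem_support_iff.mpr hcoeff)))
  rw [degree_le_iff]
  intro c hc
  rw [mem_support_iff, coeff_Tr, map_ne_zero_iff _ (frobeniusEquiv K p).symm.injective] at hc
  have := m.le_degree (mem_support_iff.mpr hc)
  rwa [hv, map_add, map_add, map_nsmul, map_nsmul, add_le_add_iff_right,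
    nsmul_le_nsmul_iff_right hp.out.ne_zero] at this

lemma leadingCoeff_Tr_of_degree_eq {h : MvPolynomial (Fin n) K} (hh : h ≠ 0) {v : Fin n →₀ ℕ}
    (hv : m.degree h = p • v + traceExp n p) :
    m.leadingCoeff (Tr n p K h) = (frobeniusEquiv K p).symm (m.leadingCoeff h) := by
  rw [leadingCoeff, degree_Tr_of_degree_eq m hh hv, coeff_Tr_of_degree_eq m hv]

variable {m} {f : MvPolynomial (Fin n) K}

lemma Tr_eq_one (hmonic : m.Monic f) (hdeg : m.degree f = traceExp n p) : Tr n p K f = 1 := by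
  have hv : m.degree f = p • 0 + traceExp n p := by rw [smul_zero, zero_add, hdeg]
  rw [eq_C_of_degree_eq_zero (degree_Tr_of_degree_eq m hmonic.ne_zero hv),
    leadingCoeff_Tr_of_degree_eq m hmonic.ne_zero hv, hmonic.leadingCoeff_eq_one, map_one, C_1]

end Trace

lemma isSqFreeMonomialIdeal_span_monomial {n : ℕ} {K : Type} [Field K] {S : Set (Fin n →₀ ℕ)}
    (hS : ∀ u ∈ S, ∃ s ∈ S, s ≤ u ∧ ∀ j, s j ≤ 1) :
    IsSqFreeMonomialIdeal n K (Ideal.span ((fun u => monomial u (1 : K)) '' S)) := by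
  refine ⟨{s ∈ S | ∀ j, s j ≤ 1}, fun s hs => hs.2, le_antisymm ?_ ?_⟩
  · rw [Ideal.span_le]
    rintro _ ⟨u, hu, rfl⟩
    obtain ⟨s, hs, hsu, hsq⟩ := hS u hu
    have hfactor : monomial u (1 : K) = monomial (u - s) 1 * monomial s 1 := by
      rw [monomial_mul, one_mul, tsub_add_cancel_of_le hsu]
    show monomial u (1 : K) ∈ _
    rw [hfactor]
    exact Ideal.mul_mem_left _ _ (Ideal.subset_span ⟨s, ⟨hs, hsq⟩, rfl⟩)
  · exact Ideal.span_mono (Set.image_mono fun s hs => hs.1)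

lemma lexp_eq_degree {n : ℕ} {K : Type} [Field K] (m : MonomialOrder (Fin n))
    (f : MvPolynomial (Fin n) K) : lexp m f = m.degree f := rfl

lemma initialIdeal_eq_span {n : ℕ} {K : Type} [Field K] (m : MonomialOrder (Fin n))
    (I : Ideal (MvPolynomial (Fin n) K)) :
    initialIdeal m I =
      Ideal.span ((fun u => monomial u (1 : K)) '' {u | ∃ g ∈ I, g ≠ 0 ∧ m.degree g = u}) := by
  rw [initialIdeal]
  congr 1
  ext x
  simp [lexp_eq_degree, eq_comm, and_assoc]

section CompatibleIdeal

variable {n p : ℕ} [hp : Fact p.Prime] {K : Type} [Field K] [CharP K p] [PerfectRing K p]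
  {m : MonomialOrder (Fin n)} {f : MvPolynomial (Fin n) K} {I : Ideal (MvPolynomial (Fin n) K)}

lemma exists_mem_degree_eq_ceilDiv (hmonic : m.Monic f) (hdeg : m.degree f = traceExp n p)
    (hI : ∀ g ∈ I, Tr n p K (f * g) ∈ I) {g : MvPolynomial (Fin n) K} (hg : g ∈ I)
    (hg0 : g ≠ 0) : ∃ g' ∈ I, g' ≠ 0 ∧ m.degree g' = m.degree g ⌈/⌉ p := by
  set v := m.degree g ⌈/⌉ p
  set w := p • v - m.degree g
  have hw : w + m.degree g = p • v := tsub_add_cancel_of_le (le_smul_ceilDiv hp.out.pos)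
  have hmon0 : monomial w (1 : K) ≠ 0 := by simp
  have hmul0 : monomial w 1 * g ≠ 0 := mul_ne_zero hmon0 hg0
  have hh : f * (monomial w 1 * g) ≠ 0 := mul_ne_zero hmonic.ne_zero hmul0
  have hdegh : m.degree (f * (monomial w 1 * g)) = p • v + traceExp n p := by
    rw [degree_mul hmonic.ne_zero hmul0, degree_mul hmon0 hg0, degree_monomial, if_neg one_ne_zero,
      hw, hdeg, add_comm]
  refine ⟨_, hI _ (I.mul_mem_left _ hg), ?_, degree_Tr_of_degree_eq m hh hdegh⟩
  rw [← m.leadingCoeff_ne_zero_iff, leadingCoeff_Tr_of_degree_eq m hh hdegh,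
    map_ne_zero_iff _ (frobeniusEquiv K p).symm.injective, m.leadingCoeff_ne_zero_iff]
  exact hh

lemma exists_mem_squarefree_degree_le (hmonic : m.Monic f)
    (hdeg : m.degree f = traceExp n p) (hI : ∀ g ∈ I, Tr n p K (f * g) ∈ I)
    {g : MvPolynomial (Fin n) K} (hg : g ∈ I) (hg0 : g ≠ 0) :
    ∃ g' ∈ I, g' ≠ 0 ∧ m.degree g' ≤ m.degree g ∧ ∀ j, m.degree g' j ≤ 1 := by
  induction hu : m.degree g using WellFoundedLT.induction generalizing g with
  | _ u ih =>
  subst hu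
  by_cases hsq : ∀ j, m.degree g j ≤ 1
  · exact ⟨g, hg, hg0, le_rfl, hsq⟩
  simp only [not_forall, not_le] at hsq
  obtain ⟨j, hj⟩ := hsq
  obtain ⟨g₁, hg₁, hg₁0, hdeg₁⟩ := exists_mem_degree_eq_ceilDiv hmonic hdeg hI hg hg0
  have hlt : m.degree g₁ < m.degree g := hdeg₁ ▸ Finsupp.ceilDiv_lt_self hp.out.two_le hj
  obtain ⟨g', hg', hg'0, hle, hsq'⟩ := ih _ hlt hg₁ hg₁0 rfl
  exact ⟨g', hg', hg'0, hle.trans hlt.le, hsq'⟩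

end CompatibleIdeal

/-- Let `S = K[X_1,…,X_n]` over a perfect field `K` of characteristic
`p > 0` and `f ∈ S` with `in_<(f) = X_1^{p-1} ⋯ X_n^{p-1}` (leading monomial, with leading
coefficient `1`) for a monomial order `<`. Then `f ⋆ Tr` is an `F`-splitting of `S`
(`(f ⋆ Tr)(r^p) = r` for all `r`), and for any ideal `I ⊆ S` with `Tr(f·I) ⊆ I`, the
initial ideal `in_<(I)` is a squarefree monomial ideal. -/
theorem stmt19 (n p : ℕ) [Fact p.Prime] (K : Type) [Field K] [CharP K p] [PerfectRing K p]
    (m : MonomialOrder (Fin n)) (f : MvPolynomial (Fin n) K)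
    (hlead : lexp m f = Finsupp.equivFunOnFinite.symm fun _ => p - 1)
    (hcoeff : coeff (Finsupp.equivFunOnFinite.symm fun _ => p - 1) f = 1) :
    (∀ r : MvPolynomial (Fin n) K, Tr n p K (f * r ^ p) = r) ∧
    (∀ I : Ideal (MvPolynomial (Fin n) K),
      (∀ g ∈ I, Tr n p K (f * g) ∈ I) → IsSqFreeMonomialIdeal n K (initialIdeal m I)) := by
  have hdeg : m.degree f = traceExp n p := (lexp_eq_degree m f).symm.trans hlead
  have hmonic : m.Monic f := by rwa [Monic, leadingCoeff, hdeg]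
  refine ⟨fun r => by rw [mul_comm, Tr_pow_mul, Tr_eq_one hmonic hdeg, mul_one], fun I hI => ?_⟩
  rw [initialIdeal_eq_span]
  refine isSqFreeMonomialIdeal_span_monomial ?_
  rintro _ ⟨g, hg, hg0, rfl⟩
  obtain ⟨g', hg', hg'0, hle, hsq⟩ := exists_mem_squarefree_degree_le hmonic hdeg hI hg hg0
  exact ⟨_, ⟨g', hg', hg'0, rfl⟩, hle, hsq⟩
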